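/- Let T = node(T_a, T_b) be a full binary tree with n leaves, where the maximal pending subtrees have n_a and n_b leaves. If n_a ≠ n_b and both n_a and n_b are odd, then C(T) > c(n); in other words, T does not have minimal Colless index. -/

import Mathlib

/-- Full binary trees: either a single leaf, or a node with two full binary subtrees. -/
inductive FBT : Type
  | leaf : FBT
  | node : FBT → FBT → FBT

namespace FBT

/-- Number of leaves of a full binary tree. -/
def leaves : FBT → ℕ
  | leaf => 1
  | node a b => leaves a + leaves b

/-- The Colless index: the sum over internal nodes of the absolute difference of the
numbers of leaves of the two maximal pending subtrees. -/
def colless : FBT → ℕ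
  | leaf => 0
  | node a b => colless a + colless b + Nat.dist (leaves a) (leaves b)

end FBT

/-- The minimal Colless index over all full binary trees with `n` leaves. -/
noncomputable def minColless (n : ℕ) : ℕ :=
  sInf {m : ℕ | ∃ T : FBT, T.leaves = n ∧ T.colless = m}

/-!
The minimum `c n` is attained by the maximally balanced tree, whose Colless index satisfies
`c n = c ⌊n/2⌋ + c ⌈n/2⌉ + (n mod 2)`. Splitting `a + b` as
`(⌊a/2⌋ + ⌈b/2⌉) + (⌈a/2⌉ + ⌊b/2⌋)`, induction gives `c (a + b) ≤ c a + c b + |a - b|`.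
When `a ≠ b` are both odd the two interleaved halves are equal, while the roots of the balanced
trees on `a` and `b` each carry imbalance `1`; this makes the inequality strict. Hence
`C (node T_a T_b) ≥ c n_a + c n_b + |n_a - n_b| > c (n_a + n_b)`.
-/

namespace FBT

def balanced : ℕ → FBT
  | 0 => leaf
  | 1 => leaf
  | n + 2 => node (balanced ((n + 2) / 2)) (balanced ((n + 3) / 2))

theorem balanced_of_two_le {n : ℕ} (hn : 2 ≤ n) :
    balanced n = node (balanced (n / 2)) (balanced ((n + 1) / 2)) := by
  obtain ⟨k, rfl⟩ := Nat.exists_eq_add_of_le' hn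
  rw [balanced]

@[simp]
theorem balanced_zero : balanced 0 = leaf := by
  rw [balanced]

@[simp]
theorem balanced_one : balanced 1 = leaf := by
  rw [balanced]

theorem leaves_balanced {n : ℕ} (hn : n ≠ 0) : (balanced n).leaves = n := by
  induction n using Nat.strong_induction_on with
  | _ n ih =>
    obtain rfl | hn2 : n = 1 ∨ 2 ≤ n := by omega
    · simp [leaves]
    · rw [balanced_of_two_le hn2, leaves, ih _ (by omega) (by omega), ih _ (by omega) (by omega)]
      omega

theorem colless_balanced_of_add_eq {p q n : ℕ} (hpq : p + q = n) (hn : 2 ≤ n)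
    (hdist : Nat.dist p q ≤ 1) :
    (balanced n).colless = (balanced p).colless + (balanced q).colless + Nat.dist p q := by
  rw [balanced_of_two_le hn, colless, leaves_balanced (by omega), leaves_balanced (by omega)]
  obtain ⟨rfl, rfl⟩ | ⟨rfl, rfl⟩ :
      p = n / 2 ∧ q = (n + 1) / 2 ∨ q = n / 2 ∧ p = (n + 1) / 2 := by
    unfold Nat.dist at hdist; omega
  · rfl
  · rw [Nat.dist_comm]; omega

theorem colless_balanced_add_le_and_odd_lt (a b : ℕ) :
    (balanced (a + b)).colless ≤ (balanced a).colless + (balanced b).colless + Nat.dist a b ∧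
      (Odd a → Odd b → a ≠ b →
        (balanced (a + b)).colless <
          (balanced a).colless + (balanced b).colless + Nat.dist a b) := by
  induction h : a + b using Nat.strong_induction_on generalizing a b with
  | _ n ih =>
  subst h
  wlog hab : a ≤ b generalizing a b
  · have := this b a (fun m hm c d hcd => ih m (by omega) c d hcd) (by omega)
    rw [add_comm, Nat.dist_comm] at this
    exact ⟨by omega, fun ha hb hne => by have := this.2 hb ha hne.symm; omega⟩
  simp only [Nat.odd_iff]
  obtain rfl | rfl | ha : a = 0 ∨ a = 1 ∨ 2 ≤ a := by omega
  · simp [colless, Nat.dist_zero_left]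
  · obtain rfl | hb : b = 1 ∨ 2 ≤ b := by omega
    · simp [balanced_of_two_le, colless, leaves]
    -- `balanced 1` cannot be halved, so `1` is paired with `⌊b/2⌋` alone.
    have hsum := colless_balanced_of_add_eq (p := (b + 1) / 2) (q := 1 + b / 2) (n := 1 + b)
      (by omega) (by omega) (by unfold Nat.dist; omega)
    have hb' := colless_balanced_of_add_eq (p := b / 2) (q := (b + 1) / 2) (n := b)
      (by omega) hb (by unfold Nat.dist; omega)
    have ih₁ := (ih (1 + b / 2) (by omega) 1 (b / 2) rfl).1
    have h₁ : (balanced 1).colless = 0 := by simp [colless]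
    unfold Nat.dist at *
    omega
  · have hb : 2 ≤ b := by omega
    have hsum := colless_balanced_of_add_eq (p := a / 2 + (b + 1) / 2) (q := (a + 1) / 2 + b / 2)
      (n := a + b) (by omega) (by omega) (by unfold Nat.dist; omega)
    have ha' := colless_balanced_of_add_eq (p := a / 2) (q := (a + 1) / 2) (n := a)
      (by omega) ha (by unfold Nat.dist; omega)
    have hb' := colless_balanced_of_add_eq (p := b / 2) (q := (b + 1) / 2) (n := b)
      (by omega) hb (by unfold Nat.dist; omega)
    have ih₁ := (ih _ (by omega) (a / 2) ((b + 1) / 2) rfl).1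
    have ih₂ := (ih _ (by omega) ((a + 1) / 2) (b / 2) rfl).1
    unfold Nat.dist at *
    omega

theorem colless_balanced_leaves_le (T : FBT) : (balanced T.leaves).colless ≤ T.colless := by
  induction T with
  | leaf => simp [leaves, colless]
  | node a b iha ihb =>
    have := (colless_balanced_add_le_and_odd_lt a.leaves b.leaves).1
    simp only [leaves, colless]
    omega

end FBT

theorem minColless_le_colless {T : FBT} {n : ℕ} (hT : T.leaves = n) :
    minColless n ≤ T.colless :=
  Nat.sInf_le ⟨T, hT, rfl⟩

theorem odd_odd_partition_not_minimal (a b : FBT)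
    (hne : a.leaves ≠ b.leaves) (ha : Odd a.leaves) (hb : Odd b.leaves) :
    (FBT.node a b).colless > minColless (a.leaves + b.leaves) := by
  have hleaves : (FBT.balanced (a.leaves + b.leaves)).leaves = a.leaves + b.leaves :=
    FBT.leaves_balanced (by have := ha.pos; omega)
  calc minColless (a.leaves + b.leaves)
      ≤ (FBT.balanced (a.leaves + b.leaves)).colless := minColless_le_colless hleaves
    _ < (FBT.balanced a.leaves).colless + (FBT.balanced b.leaves).colless +
          Nat.dist a.leaves b.leaves :=
      (FBT.colless_balanced_add_le_and_odd_lt _ _).2 ha hb hne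
    _ ≤ a.colless + b.colless + Nat.dist a.leaves b.leaves := by
      gcongr <;> exact FBT.colless_balanced_leaves_le _
    _ = (FBT.node a b).colless := rfl
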